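/- The multipartite work deficit of the three-qubit W state (ln 3) is strictly greater than that of the GHZ state (ln 2). -/

import Mathlib

noncomputable section
open scoped BigOperators

/-- Shannon entropy (natural logarithm), with the convention `0 * log 0 = 0`. -/
def shannon {α : Type*} [Fintype α] (p : α → ℝ) : ℝ := -∑ y, p y * Real.log (p y)

/-- `B` lists the members of an orthonormal basis of `ℂ^d` (the rows `B a` are the basis
vectors). -/
def ONB {d : ℕ} (B : Fin d → Fin d → ℂ) : Prop :=
  ∀ a b, (∑ i, (starRingEnd ℂ) (B a i) * B b i) = if a = b then 1 else 0

/-- Born-rule joint outcome distribution obtained by measuring each qubit of the three-qubit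
pure state with amplitudes `ψ` (in the computational basis) in the local orthonormal bases
`B₁, B₂, B₃`. -/
def bornProb3 (ψ : Fin 2 → Fin 2 → Fin 2 → ℂ) (B₁ B₂ B₃ : Fin 2 → Fin 2 → ℂ)
    (y : Fin 2 × Fin 2 × Fin 2) : ℝ :=
  Complex.normSq (∑ i, ∑ j, ∑ k,
    (starRingEnd ℂ) (B₁ y.1 i) * (starRingEnd ℂ) (B₂ y.2.1 j) *
      (starRingEnd ℂ) (B₃ y.2.2 k) * ψ i j k)

/-- Multipartite work deficit of a three-qubit *pure* state with amplitudes `ψ`: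
since `S(ρ) = 0`, it is the minimum over local orthonormal measurement bases of the Shannon
entropy of the joint outcome distribution. -/
def deficit3 (ψ : Fin 2 → Fin 2 → Fin 2 → ℂ) : ℝ :=
  sInf {h : ℝ | ∃ B₁ B₂ B₃ : Fin 2 → Fin 2 → ℂ, ONB B₁ ∧ ONB B₂ ∧ ONB B₃ ∧
    h = shannon (bornProb3 ψ B₁ B₂ B₃)}

/-- Amplitudes of the three-qubit GHZ state `(|000⟩ + |111⟩)/√2`. -/
def ghz (i j k : Fin 2) : ℂ :=
  if i = j ∧ j = k then (Complex.ofReal (Real.sqrt 2))⁻¹ else 0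

/-- Amplitudes of the three-qubit W state `(|001⟩ + |010⟩ + |100⟩)/√3`. -/
def wState (i j k : Fin 2) : ℂ :=
  if (i = 0 ∧ j = 0 ∧ k = 1) ∨ (i = 0 ∧ j = 1 ∧ k = 0) ∨ (i = 1 ∧ j = 0 ∧ k = 0) then
    (Complex.ofReal (Real.sqrt 3))⁻¹ else 0

/-!
Measuring GHZ in the computational basis gives the outcomes 000 and 111 with probability 1/2
each, so its deficit is at most ln 2. For W, a product measurement outcome has probability
|⟨abc|W⟩|², and the overlap of W with a product state is at most 4/9; since the product basis is
unitary the outcome probabilities sum to 1, so every such distribution has Shannon entropy at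
least its min-entropy ln (9/4) > ln 2.
-/

open Matrix Complex
open scoped Kronecker

local notation "I₂" => (1 : Matrix (Fin 2) (Fin 2) ℂ)

section Shannon

variable {α : Type*} [Fintype α] {p : α → ℝ}

lemma log_inv_le_shannon {c : ℝ} (hc : 0 < c) (h0 : ∀ y, 0 ≤ p y) (hle : ∀ y, p y ≤ c)
    (hsum : ∑ y, p y = 1) : Real.log c⁻¹ ≤ shannon p := by
  have key : ∀ y, p y * Real.log c⁻¹ ≤ -(p y * Real.log (p y)) := by
    intro y
    rcases (h0 y).eq_or_lt with h | h
    · simp [← h]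
    · rw [← mul_neg, ← Real.log_inv]
      exact mul_le_mul_of_nonneg_left
        (Real.log_le_log (inv_pos.mpr hc) (inv_anti₀ h (hle y))) (h0 y)
  calc Real.log c⁻¹ = ∑ y, p y * Real.log c⁻¹ := by rw [← Finset.sum_mul, hsum, one_mul]
    _ ≤ ∑ y, -(p y * Real.log (p y)) := Finset.sum_le_sum fun y _ => key y
    _ = shannon p := by rw [shannon, Finset.sum_neg_distrib]

lemma shannon_nonneg (h0 : ∀ y, 0 ≤ p y) (hsum : ∑ y, p y = 1) : 0 ≤ shannon p := by
  have hle : ∀ y, p y ≤ 1 := fun y =>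
    hsum ▸ Finset.single_le_sum (fun i _ => h0 i) (Finset.mem_univ y)
  simpa using log_inv_le_shannon one_pos h0 hle hsum

end Shannon

lemma ONB.map_star_mem_unitaryGroup {d : ℕ} {B : Fin d → Fin d → ℂ} (hB : ONB B) :
    (of B).map star ∈ unitaryGroup (Fin d) ℂ := by
  rw [mem_unitaryGroup_iff]
  ext a b
  simpa [mul_apply, one_apply] using hB a b

lemma onb_one {d : ℕ} : ONB (1 : Matrix (Fin d) (Fin d) ℂ) := by
  intro a b
  simp [one_apply]

lemma ONB.sum_sq_norm {d : ℕ} {B : Fin d → Fin d → ℂ} (hB : ONB B) (a : Fin d) :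
    ∑ i, ‖B a i‖ ^ 2 = 1 := by
  have h := hB a a
  simp only [conj_mul', if_true] at h
  exact_mod_cast h

lemma sum_normSq_mulVec_of_mem_unitaryGroup {n : Type*} [Fintype n] [DecidableEq n]
    {U : Matrix n n ℂ} (hU : U ∈ unitaryGroup n ℂ) (v : n → ℂ) :
    ∑ i, normSq ((U *ᵥ v) i) = ∑ i, normSq (v i) := by
  have hUU : star U * U = 1 := mem_unitaryGroup_iff'.mp hU
  have h : star (U *ᵥ v) ⬝ᵥ (U *ᵥ v) = star v ⬝ᵥ v := by
    rw [star_mulVec, dotProduct_mulVec, vecMul_vecMul, ← star_eq_conjTranspose, hUU, vecMul_one]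
  simp only [dotProduct, Pi.star_apply, RCLike.star_def, ← normSq_eq_conj_mul_self] at h
  exact_mod_cast h

lemma sum_bornProb3 (ψ : Fin 2 → Fin 2 → Fin 2 → ℂ) {B₁ B₂ B₃ : Fin 2 → Fin 2 → ℂ}
    (h₁ : ONB B₁) (h₂ : ONB B₂) (h₃ : ONB B₃) :
    ∑ y, bornProb3 ψ B₁ B₂ B₃ y = ∑ x : Fin 2 × Fin 2 × Fin 2, normSq (ψ x.1 x.2.1 x.2.2) := by
  let U := (of B₁).map star ⊗ₖ ((of B₂).map star ⊗ₖ (of B₃).map star)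
  have hU : U ∈ unitaryGroup _ ℂ := kronecker_mem_unitary h₁.map_star_mem_unitaryGroup
    (kronecker_mem_unitary h₂.map_star_mem_unitaryGroup h₃.map_star_mem_unitaryGroup)
  have hborn : ∀ y, bornProb3 ψ B₁ B₂ B₃ y = normSq ((U *ᵥ fun x => ψ x.1 x.2.1 x.2.2) y) := by
    intro y
    simp only [bornProb3, mulVec, dotProduct, Fintype.sum_prod_type, U, kroneckerMap_apply,
      map_apply, of_apply, RCLike.star_def, mul_assoc]
  simp only [hborn, sum_normSq_mulVec_of_mem_unitaryGroup hU]

section Deficit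

variable {ψ : Fin 2 → Fin 2 → Fin 2 → ℂ}

lemma deficit3_le_shannon (hψ : ∑ x : Fin 2 × Fin 2 × Fin 2, normSq (ψ x.1 x.2.1 x.2.2) = 1)
    {B₁ B₂ B₃ : Fin 2 → Fin 2 → ℂ} (h₁ : ONB B₁) (h₂ : ONB B₂) (h₃ : ONB B₃) :
    deficit3 ψ ≤ shannon (bornProb3 ψ B₁ B₂ B₃) := by
  refine csInf_le ⟨0, ?_⟩ ⟨B₁, B₂, B₃, h₁, h₂, h₃, rfl⟩
  rintro h ⟨B₁, B₂, B₃, h₁, h₂, h₃, rfl⟩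
  exact shannon_nonneg (fun y => normSq_nonneg _) ((sum_bornProb3 ψ h₁ h₂ h₃).trans hψ)

lemma le_deficit3 {c : ℝ} (h : ∀ B₁ B₂ B₃ : Fin 2 → Fin 2 → ℂ, ONB B₁ → ONB B₂ → ONB B₃ →
      c ≤ shannon (bornProb3 ψ B₁ B₂ B₃)) :
    c ≤ deficit3 ψ := by
  refine le_csInf ⟨_, I₂, I₂, I₂, onb_one, onb_one, onb_one, rfl⟩ ?_
  rintro _ ⟨B₁, B₂, B₃, h₁, h₂, h₃, rfl⟩
  exact h B₁ B₂ B₃ h₁ h₂ h₃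

lemma bornProb3_one (y : Fin 2 × Fin 2 × Fin 2) :
    bornProb3 ψ I₂ I₂ I₂ y = normSq (ψ y.1 y.2.1 y.2.2) := by
  simp [bornProb3, one_apply]

end Deficit

lemma sum_normSq_ghz : ∑ x : Fin 2 × Fin 2 × Fin 2, normSq (ghz x.1 x.2.1 x.2.2) = 1 := by
  simp [Fintype.sum_prod_type, Fin.sum_univ_two, ghz]
  norm_num

lemma sum_normSq_wState : ∑ x : Fin 2 × Fin 2 × Fin 2, normSq (wState x.1 x.2.1 x.2.2) = 1 := by
  simp [Fintype.sum_prod_type, Fin.sum_univ_two, wState]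
  norm_num

lemma shannon_bornProb3_ghz_one : shannon (bornProb3 ghz I₂ I₂ I₂) = Real.log 2 := by
  simp [shannon, bornProb3_one, Fintype.sum_prod_type, Fin.sum_univ_two, ghz]
  ring

lemma sq_add_add_le_four_thirds {a a' b b' c c' : ℝ}
    (ha : a ^ 2 + a' ^ 2 = 1) (hb : b ^ 2 + b' ^ 2 = 1) (hc : c ^ 2 + c' ^ 2 = 1) :
    (a * b * c' + a * b' * c + a' * b * c) ^ 2 ≤ 4 / 3 := by
  have cauchy_schwarz : (a * b * c' + a * b' * c + a' * b * c) ^ 2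
      ≤ (b * c' + b' * c) ^ 2 + (b * c) ^ 2 := by
    nlinarith [sq_nonneg (a * (b * c) - a' * (b * c' + b' * c))]
  have am_gm : 2 * (b * b') * (c * c') ≤ (b * b') ^ 2 + (c * c') ^ 2 := by
    nlinarith [sq_nonneg (b * b' - c * c')]
  nlinarith [sq_nonneg (b ^ 2 + c ^ 2 - 4 / 3), sq_nonneg (b ^ 2 - c ^ 2)]

lemma bornProb3_wState_le {B₁ B₂ B₃ : Fin 2 → Fin 2 → ℂ} (h₁ : ONB B₁) (h₂ : ONB B₂)
    (h₃ : ONB B₃) (y : Fin 2 × Fin 2 × Fin 2) : bornProb3 wState B₁ B₂ B₃ y ≤ 4 / 9 := by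
  set a := fun i => star (B₁ y.1 i)
  set b := fun j => star (B₂ y.2.1 j)
  set c := fun k => star (B₃ y.2.2 k)
  set A := a 0 * b 0 * c 1 + a 0 * b 1 * c 0 + a 1 * b 0 * c 0
  have hamp : bornProb3 wState B₁ B₂ B₃ y = ‖A‖ ^ 2 / 3 := by
    have : bornProb3 wState B₁ B₂ B₃ y = normSq (A * (ofReal (Real.sqrt 3))⁻¹) := by
      simp only [bornProb3, wState, Fin.sum_univ_two]
      congr 1
      simp [A, a, b, c]
      ring
    simp [this, ← Complex.sq_norm, div_eq_mul_inv, mul_pow]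
  have htri : ‖A‖ ≤ ‖a 0‖ * ‖b 0‖ * ‖c 1‖ + ‖a 0‖ * ‖b 1‖ * ‖c 0‖ + ‖a 1‖ * ‖b 0‖ * ‖c 0‖ := by
    simpa only [norm_mul] using norm_add₃_le (a := a 0 * b 0 * c 1) (b := a 0 * b 1 * c 0)
      (c := a 1 * b 0 * c 0)
  have hunit := sq_add_add_le_four_thirds (a := ‖a 0‖) (a' := ‖a 1‖) (b := ‖b 0‖) (b' := ‖b 1‖)
    (c := ‖c 0‖) (c' := ‖c 1‖) (by simpa [a, Fin.sum_univ_two] using h₁.sum_sq_norm y.1)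
    (by simpa [b, Fin.sum_univ_two] using h₂.sum_sq_norm y.2.1)
    (by simpa [c, Fin.sum_univ_two] using h₃.sum_sq_norm y.2.2)
  rw [hamp]
  nlinarith [norm_nonneg A]

/-- The multipartite work deficit of the W state is strictly greater than that of the
GHZ state. -/
theorem wState_deficit_gt_ghz_deficit : deficit3 wState > deficit3 ghz := by
  calc deficit3 ghz
      ≤ shannon (bornProb3 ghz I₂ I₂ I₂) :=
        deficit3_le_shannon sum_normSq_ghz onb_one onb_one onb_one
    _ = Real.log 2 := shannon_bornProb3_ghz_one
    _ < Real.log (4 / 9 : ℝ)⁻¹ := Real.log_lt_log two_pos (by norm_num)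
    _ ≤ deficit3 wState := le_deficit3 fun _ _ _ h₁ h₂ h₃ =>
      log_inv_le_shannon (by norm_num) (fun _ => normSq_nonneg _) (bornProb3_wState_le h₁ h₂ h₃)
        ((sum_bornProb3 wState h₁ h₂ h₃).trans sum_normSq_wState)
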